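/- Let t̂, f̂, σ_t, σ_f be real numbers with 0 < σ_t < t̂ and 0 < σ_f < f̂. Set r₁ = (f̂ − σ_f)/(t̂ + σ_t) and r₂ = (f̂ + σ_f)/(t̂ − σ_t). Then the maximal uncertainty satisfies Δ = sup_{η ∈ (0,1)} (UB(η) − LB(η)) = (1 − √(r₁/r₂)) / (1 + √(r₁/r₂)). -/

import Mathlib

open Set

/-- Precision as a function of positive class prevalence `η`, TPR `t` and FPR `f`. -/
noncomputable def Prec (η t f : ℝ) : ℝ := η * t / (η * t + (1 - η) * f)

/-- Upper bound `UB(η)`: supremum of precision over the confidence intervals. -/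
noncomputable def UB (th σt fh σf η : ℝ) : ℝ :=
  sSup {p : ℝ | ∃ t ∈ Ioo (th - σt) (th + σt), ∃ f ∈ Ioo (fh - σf) (fh + σf), p = Prec η t f}

/-- Lower bound `LB(η)`: infimum of precision over the confidence intervals. -/
noncomputable def LB (th σt fh σf η : ℝ) : ℝ :=
  sInf {p : ℝ | ∃ t ∈ Ioo (th - σt) (th + σt), ∃ f ∈ Ioo (fh - σf) (fh + σf), p = Prec η t f}

/-- The maximal uncertainty `Δ = sup_{η ∈ (0,1)} (UB(η) - LB(η))`. -/
noncomputable def Delta (th σt fh σf : ℝ) : ℝ :=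
  sSup {d : ℝ | ∃ η ∈ Ioo (0:ℝ) 1, d = UB th σt fh σf η - LB th σt fh σf η}

/-!
Precision is increasing in `t`, decreasing in `f` and continuous, so `UB η` and `LB η` are its
values at the corners `(t̂ + σ_t, f̂ - σ_f)` and `(t̂ - σ_t, f̂ + σ_f)` of the box. Written as
`a / (a + b)` and `c / (c + d)`, these corners have `b c / (a d) = r₁ / r₂ = s²` independently of
`η`, and AM-GM gives `(a + b) (c + d) ≥ a d (1 + s)²`, with equality iff `a c = b d`. Hence
`UB η - LB η ≤ (1 - s) / (1 + s)` for every `η`, with equality at the prevalence of odds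
`η / (1 - η) = s (f̂ + σ_f) / (t̂ - σ_t)`.
-/

lemma div_add_sub_div_add_le {a b c d s : ℝ} (ha : 0 < a) (hb : 0 < b) (hc : 0 < c) (hd : 0 < d)
    (hs₀ : 0 ≤ s) (hs₁ : s ≤ 1) (h : b * c = s ^ 2 * (a * d)) :
    a / (a + b) - c / (c + d) ≤ (1 - s) / (1 + s) := by
  have amgm : 2 * s * (a * d) ≤ a * c + b * d := by
    nlinarith [sq_nonneg (a * c - b * d), mul_pos ha hd, mul_pos ha hc, mul_pos hb hd]
  rw [div_sub_div _ _ (by positivity) (by positivity),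
    div_le_div_iff₀ (by positivity) (by positivity)]
  nlinarith [mul_nonneg (sub_nonneg.2 hs₁) (sub_nonneg.2 amgm)]

lemma div_add_sub_div_add_eq {a b c d s : ℝ} (ha : 0 < a) (hb : 0 < b) (hc : 0 < c) (hd : 0 < d)
    (hs₀ : 0 ≤ s) (h : b * c = s ^ 2 * (a * d)) (hbal : a * c = b * d) :
    a / (a + b) - c / (c + d) = (1 - s) / (1 + s) := by
  have hac : a * c = s * (a * d) := by
    have : (a * c) ^ 2 = (s * (a * d)) ^ 2 := by linear_combination (a * c) * hbal + (a * d) * h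
    exact (pow_left_inj₀ (by positivity) (by positivity) two_ne_zero).1 this
  rw [div_sub_div _ _ (by positivity) (by positivity),
    div_eq_div_iff (by positivity) (by positivity)]
  linear_combination -2 * h - 2 * (1 - s) * hac + (1 - s) * hbal

lemma Prec_le_Prec {η t t' f f' : ℝ} (hη : η ∈ Ioo 0 1) (ht : 0 < t) (htt' : t ≤ t')
    (hf' : 0 < f') (hf'f : f' ≤ f) : Prec η t f ≤ Prec η t' f' := by
  obtain ⟨hη₀, hη₁⟩ := hη
  have hη₁' : 0 < 1 - η := sub_pos.2 hη₁
  have hf : 0 < f := hf'.trans_le hf'f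
  unfold Prec
  rw [div_le_div_iff₀ (by positivity) (by nlinarith)]
  nlinarith [mul_le_mul htt' hf'f hf'.le (ht.trans_le htt').le, mul_pos hη₀ hη₁']

lemma Prec_mem_closure {η a b c d t₀ f₀ : ℝ} (hab : a < b) (hcd : c < d)
    (ht₀ : t₀ ∈ Icc a b) (hf₀ : f₀ ∈ Icc c d) (hden : η * t₀ + (1 - η) * f₀ ≠ 0) :
    Prec η t₀ f₀ ∈ closure {p | ∃ t ∈ Ioo a b, ∃ f ∈ Ioo c d, p = Prec η t f} := by
  have himage : {p | ∃ t ∈ Ioo a b, ∃ f ∈ Ioo c d, p = Prec η t f} =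
      (fun x : ℝ × ℝ => Prec η x.1 x.2) '' Ioo a b ×ˢ Ioo c d := by
    ext p
    simp [eq_comm]
  have hcont : ContinuousAt (fun x : ℝ × ℝ => Prec η x.1 x.2) (t₀, f₀) :=
    ContinuousAt.div (by fun_prop) (by fun_prop) hden
  rw [himage]
  refine hcont.continuousWithinAt.mem_closure_image ?_
  rw [closure_prod_eq, closure_Ioo hab.ne, closure_Ioo hcd.ne]
  exact ⟨ht₀, hf₀⟩

lemma isLUB_Prec {η a b c d : ℝ} (hη : η ∈ Ioo 0 1) (ha : 0 < a) (hab : a < b)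
    (hc : 0 < c) (hcd : c < d) :
    IsLUB {p | ∃ t ∈ Ioo a b, ∃ f ∈ Ioo c d, p = Prec η t f} (Prec η b c) := by
  refine isLUB_of_mem_closure ?_ (Prec_mem_closure hab hcd ⟨hab.le, le_rfl⟩ ⟨le_rfl, hcd.le⟩ ?_)
  · rintro p ⟨t, ht, f, hf, rfl⟩
    exact Prec_le_Prec hη (ha.trans ht.1) ht.2.le hc hf.1.le
  · nlinarith [hη.1, hη.2]

lemma isGLB_Prec {η a b c d : ℝ} (hη : η ∈ Ioo 0 1) (ha : 0 < a) (hab : a < b)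
    (hc : 0 < c) (hcd : c < d) :
    IsGLB {p | ∃ t ∈ Ioo a b, ∃ f ∈ Ioo c d, p = Prec η t f} (Prec η a d) := by
  refine isGLB_of_mem_closure ?_ (Prec_mem_closure hab hcd ⟨le_rfl, hab.le⟩ ⟨hcd.le, le_rfl⟩ ?_)
  · rintro p ⟨t, ht, f, hf, rfl⟩
    exact Prec_le_Prec hη ha ht.1.le (hc.trans hf.1) hf.2.le
  · nlinarith [hη.1, hη.2]

lemma Prec_sub_Prec_le {η tp tm fp fm s : ℝ} (hη : η ∈ Ioo 0 1) (htp : 0 < tp) (htm : 0 < tm)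
    (hfp : 0 < fp) (hfm : 0 < fm) (hs₀ : 0 ≤ s) (hs₁ : s ≤ 1)
    (h : tm * fm = s ^ 2 * (tp * fp)) :
    Prec η tp fm - Prec η tm fp ≤ (1 - s) / (1 + s) := by
  have hη₁ : 0 < 1 - η := sub_pos.2 hη.2
  exact div_add_sub_div_add_le (mul_pos hη.1 htp) (mul_pos hη₁ hfm) (mul_pos hη.1 htm)
    (mul_pos hη₁ hfp) hs₀ hs₁ (by linear_combination η * (1 - η) * h)

lemma exists_Prec_sub_Prec_eq {tp tm fp fm s : ℝ} (htp : 0 < tp) (htm : 0 < tm)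
    (hfp : 0 < fp) (hfm : 0 < fm) (hs : 0 < s) (h : tm * fm = s ^ 2 * (tp * fp)) :
    ∃ η ∈ Ioo (0 : ℝ) 1, Prec η tp fm - Prec η tm fp = (1 - s) / (1 + s) := by
  obtain ⟨η, hη⟩ : ∃ η, η = s * fp / (s * fp + tm) := ⟨_, rfl⟩
  have hη₁ : 1 - η = tm / (s * fp + tm) := by rw [hη]; field_simp; ring
  have hη₀pos : 0 < η := by rw [hη]; positivity
  have hη₁pos : 0 < 1 - η := by rw [hη₁]; positivity
  refine ⟨η, ⟨hη₀pos, sub_pos.1 hη₁pos⟩, ?_⟩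
  refine div_add_sub_div_add_eq (mul_pos hη₀pos htp) (mul_pos hη₁pos hfm) (mul_pos hη₀pos htm)
    (mul_pos hη₁pos hfp) hs.le (by linear_combination η * (1 - η) * h) ?_
  rw [hη₁, hη]
  field_simp
  linear_combination -h

lemma UB_eq {th σt fh σf η : ℝ} (hη : η ∈ Ioo 0 1) (hσt : 0 < σt) (hth : σt < th)
    (hσf : 0 < σf) (hfh : σf < fh) : UB th σt fh σf η = Prec η (th + σt) (fh - σf) :=
  (isLUB_Prec hη (by linarith) (by linarith) (by linarith) (by linarith)).csSup_eq
    ⟨_, th, ⟨by linarith, by linarith⟩, fh, ⟨by linarith, by linarith⟩, rfl⟩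

lemma LB_eq {th σt fh σf η : ℝ} (hη : η ∈ Ioo 0 1) (hσt : 0 < σt) (hth : σt < th)
    (hσf : 0 < σf) (hfh : σf < fh) : LB th σt fh σf η = Prec η (th - σt) (fh + σf) :=
  (isGLB_Prec hη (by linarith) (by linarith) (by linarith) (by linarith)).csInf_eq
    ⟨_, th, ⟨by linarith, by linarith⟩, fh, ⟨by linarith, by linarith⟩, rfl⟩

/-- closed form of the maximal uncertainty `Δ`. -/
theorem delta_closed_form (th fh σt σf : ℝ)
    (hσt : 0 < σt) (hth : σt < th) (hσf : 0 < σf) (hfh : σf < fh) :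
    Delta th σt fh σf =
      (1 - Real.sqrt (((fh - σf) / (th + σt)) / ((fh + σf) / (th - σt)))) /
      (1 + Real.sqrt (((fh - σf) / (th + σt)) / ((fh + σf) / (th - σt)))) := by
  have htm : 0 < th - σt := by linarith
  have hfm : 0 < fh - σf := by linarith
  have htp : 0 < th + σt := by linarith
  have hfp : 0 < fh + σf := by linarith
  set r := ((fh - σf) / (th + σt)) / ((fh + σf) / (th - σt)) with hr
  have hr₀ : 0 < r := by positivity
  have hr₁ : r ≤ 1 := by
    rw [hr, div_le_one (by positivity), div_le_div_iff₀ htp htm]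
    nlinarith
  have hrel : (th - σt) * (fh - σf) = √r ^ 2 * ((th + σt) * (fh + σf)) := by
    rw [Real.sq_sqrt hr₀.le, hr]
    field_simp
  have hgap : ∀ η ∈ Ioo (0 : ℝ) 1, UB th σt fh σf η - LB th σt fh σf η =
      Prec η (th + σt) (fh - σf) - Prec η (th - σt) (fh + σf) := fun η hη => by
    rw [UB_eq hη hσt hth hσf hfh, LB_eq hη hσt hth hσf hfh]
  obtain ⟨η₀, hη₀, hmax⟩ := exists_Prec_sub_Prec_eq htp htm hfp hfm (Real.sqrt_pos.2 hr₀) hrel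
  refine IsGreatest.csSup_eq ⟨⟨η₀, hη₀, by rw [hgap η₀ hη₀, hmax]⟩, ?_⟩
  rintro _ ⟨η, hη, rfl⟩
  rw [hgap η hη]
  exact Prec_sub_Prec_le hη htp htm hfp hfm (Real.sqrt_nonneg r) (Real.sqrt_le_one.2 hr₁) hrel
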